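/- For a proper subdomain D ⊊ R^n, x ∈ D, and y ∈ D with |x-y| < δ_D(x), the inner Cassinian metric satisfies c̃_D(x,y) ≤ |x-y|/(δ_D(x)·(δ_D(x) - |x-y|)). -/

import Mathlib

open Metric Set

abbrev E (n : ℕ) := EuclideanSpace ℝ (Fin n)

noncomputable def cassinian {n : ℕ} (D : Set (E n)) (x y : E n) : ℝ :=
  ⨆ p : frontier D, dist x y / (dist x (p : E n) * dist (p : E n) y)

/-- The Cassinian length of a curve `g : [0,1] → ℝⁿ`: the supremum over partitions
of `[0,1]` of the sums of Cassinian distances of consecutive points. -/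
noncomputable def cassinianLength {n : ℕ} (D : Set (E n)) (g : ℝ → E n) : ENNReal :=
  ⨆ p : ℕ × {u : ℕ → ℝ // Monotone u ∧ ∀ i, u i ∈ Icc (0 : ℝ) 1},
    ∑ i ∈ Finset.range p.1, ENNReal.ofReal (cassinian D (g (p.2.1 i)) (g (p.2.1 (i + 1))))

/-- The inner Cassinian metric: the infimum of Cassinian lengths over curves in `D`
joining `x` to `y`. -/
noncomputable def innerCassinian {n : ℕ} (D : Set (E n)) (x y : E n) : ENNReal :=
  ⨅ g : {g : ℝ → E n // ContinuousOn g (Icc (0 : ℝ) 1) ∧ g 0 = x ∧ g 1 = y ∧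
      g '' Icc (0 : ℝ) 1 ⊆ D},
    cassinianLength D g.1

/-!
Along the segment `t ↦ x + t (y - x)` the distance to `∂D` is at least `δ - t d`, where
`δ = δ_D(x)` and `d = |x - y|`. Hence the Cassinian distance between the points at parameters
`s ≤ t` is at most `(t - s) d / ((δ - s d)(δ - t d)) = F t - F s` for `F t = (δ - t d)⁻¹`,
so every partition sum telescopes to at most `F 1 - F 0 = d / (δ (δ - d))`.
-/

section NormedSpace

variable {F : Type*} [NormedAddCommGroup F] [NormedSpace ℝ F]

theorem ball_infDist_frontier_subset [FiniteDimensional ℝ F] {s : Set F} {x : F} (hx : x ∈ s) :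
    ball x (infDist x (frontier s)) ⊆ s := by
  rcases eq_or_ne s univ with rfl | hs
  · exact subset_univ _
  obtain ⟨p, hp, hxp⟩ := exists_mem_frontier_infDist_compl_eq_dist hx hs
  exact (ball_subset_ball (hxp ▸ infDist_le_dist_of_mem hp)).trans ball_infDist_compl_subset

theorem infDist_sub_mul_dist_le_infDist_lineMap (s : Set F) (x y : F) {t : ℝ} (ht : 0 ≤ t) :
    infDist x s - t * dist x y ≤ infDist (AffineMap.lineMap x y t) s := by
  have := infDist_le_infDist_add_dist (s := s) (x := x) (y := AffineMap.lineMap x y t)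
  rw [dist_left_lineMap, Real.norm_of_nonneg ht] at this
  linarith

end NormedSpace

section Cassinian

variable {n : ℕ} {D : Set (E n)}

theorem cassinian_nonneg (u v : E n) : 0 ≤ cassinian D u v :=
  Real.iSup_nonneg fun _ => by positivity

theorem cassinian_le_of_le_infDist {u v : E n} {a b : ℝ} (ha : 0 < a) (hb : 0 < b)
    (hau : a ≤ infDist u (frontier D)) (hbv : b ≤ infDist v (frontier D)) :
    cassinian D u v ≤ dist u v / (a * b) := by
  refine Real.iSup_le (fun ⟨p, hp⟩ => ?_) (by positivity)
  have hup : a ≤ dist u p := hau.trans (infDist_le_dist_of_mem hp)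
  have hpv : b ≤ dist p v := hbv.trans (dist_comm v p ▸ infDist_le_dist_of_mem hp)
  exact div_le_div_of_nonneg_left dist_nonneg (mul_pos ha hb)
    (mul_le_mul hup hpv hb.le (ha.le.trans hup))

theorem cassinianLength_le_sub {g : ℝ → E n} {F : ℝ → ℝ}
    (hF : ∀ s ∈ Icc (0 : ℝ) 1, ∀ t ∈ Icc (0 : ℝ) 1, s ≤ t →
      cassinian D (g s) (g t) ≤ F t - F s) :
    cassinianLength D g ≤ ENNReal.ofReal (F 1 - F 0) := by
  refine iSup_le fun ⟨N, u, hu, huI⟩ => ?_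
  have hstep (i : ℕ) : cassinian D (g (u i)) (g (u (i + 1))) ≤ F (u (i + 1)) - F (u i) :=
    hF _ (huI i) _ (huI (i + 1)) (hu i.le_succ)
  have hleft := hF 0 (left_mem_Icc.2 zero_le_one) (u 0) (huI 0) (huI 0).1
  have hright := hF (u N) (huI N) 1 (right_mem_Icc.2 zero_le_one) (huI N).2
  calc ∑ i ∈ Finset.range N, ENNReal.ofReal (cassinian D (g (u i)) (g (u (i + 1))))
      ≤ ∑ i ∈ Finset.range N, ENNReal.ofReal (F (u (i + 1)) - F (u i)) :=
        Finset.sum_le_sum fun i _ => ENNReal.ofReal_le_ofReal (hstep i)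
    _ = ENNReal.ofReal (∑ i ∈ Finset.range N, (F (u (i + 1)) - F (u i))) :=
        (ENNReal.ofReal_sum_of_nonneg fun i _ => (cassinian_nonneg _ _).trans (hstep i)).symm
    _ = ENNReal.ofReal (F (u N) - F (u 0)) := by rw [Finset.sum_range_sub (fun i => F (u i))]
    _ ≤ ENNReal.ofReal (F 1 - F 0) := ENNReal.ofReal_le_ofReal <| by
        linarith [cassinian_nonneg (D := D) (g 0) (g (u 0)),
          cassinian_nonneg (D := D) (g (u N)) (g 1)]

theorem cassinian_lineMap_le {x y : E n} (hxy : dist x y < infDist x (frontier D))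
    {s t : ℝ} (hs : 0 ≤ s) (hst : s ≤ t) (ht : t ≤ 1) :
    cassinian D (AffineMap.lineMap x y s) (AffineMap.lineMap x y t) ≤
      (infDist x (frontier D) - t * dist x y)⁻¹ -
        (infDist x (frontier D) - s * dist x y)⁻¹ := by
  set δ := infDist x (frontier D)
  set d := dist x y
  have hd : 0 ≤ d := dist_nonneg
  have hδs : 0 < δ - s * d := by nlinarith
  have hδt : 0 < δ - t * d := by nlinarith
  refine (cassinian_le_of_le_infDist hδs hδt
    (infDist_sub_mul_dist_le_infDist_lineMap _ x y hs)
    (infDist_sub_mul_dist_le_infDist_lineMap _ x y (hs.trans hst))).trans_eq ?_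
  rw [dist_lineMap_lineMap, Real.dist_eq, abs_of_nonpos (by linarith),
    inv_sub_inv hδt.ne' hδs.ne']
  ring

end Cassinian

theorem innerCassinian_upper_bound_general (n : ℕ) (D : Set (E n))
    (x y : E n) (hx : x ∈ D)
    (hxy : dist x y < infDist x (frontier D)) :
    innerCassinian D x y ≤
      ENNReal.ofReal (dist x y /
        (infDist x (frontier D) * (infDist x (frontier D) - dist x y))) := by
  set δ := infDist x (frontier D)
  set d := dist x y
  have hδ : 0 < δ := dist_nonneg.trans_lt hxy
  have hδd : 0 < δ - d := by linarith
  have hsegment : AffineMap.lineMap x y '' Icc (0 : ℝ) 1 ⊆ D := by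
    rintro _ ⟨t, ⟨ht0, ht1⟩, rfl⟩
    refine ball_infDist_frontier_subset hx ?_
    rw [mem_ball, dist_comm, dist_left_lineMap, Real.norm_of_nonneg ht0]
    nlinarith [dist_nonneg (x := x) (y := y)]
  calc innerCassinian D x y ≤ cassinianLength D (AffineMap.lineMap x y) :=
        iInf_le_of_le ⟨_, AffineMap.lineMap_continuous.continuousOn,
          AffineMap.lineMap_apply_zero _ _, AffineMap.lineMap_apply_one _ _, hsegment⟩ le_rfl
    _ ≤ ENNReal.ofReal ((δ - 1 * d)⁻¹ - (δ - 0 * d)⁻¹) :=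
        cassinianLength_le_sub fun s hs t ht hst => cassinian_lineMap_le hxy hs.1 hst ht.2
    _ = ENNReal.ofReal (d / (δ * (δ - d))) := by
        rw [one_mul, zero_mul, sub_zero, inv_sub_inv hδd.ne' hδ.ne']
        ring_nf

theorem innerCassinian_upper_bound (n : ℕ) (hn : 2 ≤ n) (D : Set (E n))
    (hD : IsOpen D) (hDc : IsConnected D) (hDp : D ≠ univ)
    (x y : E n) (hx : x ∈ D) (hy : y ∈ D)
    (hxy : dist x y < infDist x (frontier D)) :
    innerCassinian D x y ≤
      ENNReal.ofReal (dist x y /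
        (infDist x (frontier D) * (infDist x (frontier D) - dist x y))) :=
  innerCassinian_upper_bound_general n D x y hx hxy
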